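/- arXiv:1111.1797 — 2 statements merged into one kernel-verified Lean document; each statement's English description precedes it below -/
import Mathlib

section
/- Let 0 < y < μ₁ ≤ 1, Δ' = μ₁ − y, R = μ₁(1−y)/(y(1−μ₁)), and D the KL divergence between Bernoulli(y) and Bernoulli(μ₁). Let s(j) ~ Binomial(j, μ₁) and X(j,s,y) be geometric with success probability 1 − F^{beta}_{s+1,j−s+1}(y). Then for any nonnegative integer j < (y/D) ln R, E[E[min{X(j,s(j),y), T} | s(j)]] ≤ 1 + 2/(1−y) + (μ₁/Δ') e^{−Dj}. -/
open MeasureTheory Real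

noncomputable def binPMF (n : ℕ) (p : ℝ) (s : ℕ) : ℝ :=
  (n.choose s : ℝ) * p ^ s * (1 - p) ^ (n - s)

noncomputable def binCDF (n : ℕ) (p : ℝ) (s : ℤ) : ℝ :=
  ∑ k ∈ Finset.range (s + 1).toNat, binPMF n p k

noncomputable def betaPDF (a b : ℕ) (x : ℝ) : ℝ :=
  if 0 < x ∧ x < 1 then
    (Real.Gamma (a + b) / (Real.Gamma a * Real.Gamma b)) * x ^ (a - 1) * (1 - x) ^ (b - 1)
  else 0

noncomputable def betaCDF (a b : ℕ) (y : ℝ) : ℝ :=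
  ∫ x in Set.Iic y, betaPDF a b x

/-- `E[min{X(j,s,y), T} | s]` where `X(j,s,y)` is geometric (number of failures before
the first success) with success probability `1 − F^beta_{s+1,j−s+1}(y)`. -/
noncomputable def geomExpMin (j s : ℕ) (y : ℝ) (T : ℕ) : ℝ :=
  ∑' k : ℕ, (min k T : ℝ) * (betaCDF (s + 1) (j - s + 1) y) ^ k *
    (1 - betaCDF (s + 1) (j - s + 1) y)

/-! `E[min {X, T} | s] ≤ E[X | s] = 1 / F_{j+1,y}(s) - 1`, because the Beta CDF
`F^beta_{s+1,j-s+1}(y)` equals `1 - F_{j+1,y}(s)`: both are `∫₀ʸ (j+1) b_{j,t}(s) dt`, as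
`∂ₚ F_{n+1,p}(s) = -(n+1) b_{n,p}(s)`. Here `b` and `F` are the binomial pmf and CDF.

Split the sum over `s` at `m = ⌊y j⌋`. For `s ≤ m`, `F_{j+1,y}(s) ≥ b_{j+1,y}(s)` bounds the terms
by a geometric series in `(μ₁/y)^s ((1-μ₁)/(1-y))^(j-s)`, whose last term is at most `e^{-D j}`
because `m ≤ y j`. For `s > m`, `F_{j+1,y}(s) ≥ (1-y) F_{j,y}(s) ≥ (1-y)/2` by the median property
of the binomial law: `F_{n,p}(s) ≥ 1/2` whenever `n p ≤ s`. As `F_{n,p}(s)` decreases in `p`, this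
only needs checking at `p = s/n`: for `p ≥ 1/2` each pmf term above `s` is dominated by its mirror
image below `s`, and for `p ≤ 1/2` the density `t ↦ n b_{n-1,t}(s)` of `1 - F_{n,t}(s)` is larger
at `p + x` than at `p - x`.
-/

open Finset

lemma binPMF_nonneg {p : ℝ} (h0 : 0 ≤ p) (h1 : p ≤ 1) (n s : ℕ) : 0 ≤ binPMF n p s := by
  have : 0 ≤ 1 - p := by linarith
  unfold binPMF; positivity

lemma binPMF_pos {n : ℕ} {p : ℝ} (h0 : 0 < p) (h1 : p < 1) {s : ℕ} (hs : s ≤ n) :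
    0 < binPMF n p s := by
  have : 0 < 1 - p := by linarith
  have : (0 : ℝ) < n.choose s := mod_cast Nat.choose_pos hs
  unfold binPMF; positivity

lemma sum_range_binPMF (n : ℕ) (p : ℝ) : ∑ k ∈ range (n + 1), binPMF n p k = 1 := by
  calc ∑ k ∈ range (n + 1), binPMF n p k
      = ∑ k ∈ range (n + 1), p ^ k * (1 - p) ^ (n - k) * n.choose k :=
        sum_congr rfl fun k _ => by unfold binPMF; ring
    _ = 1 := by rw [← add_pow, add_sub_cancel, one_pow]

lemma binCDF_natCast (n : ℕ) (p : ℝ) (s : ℕ) :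
    binCDF n p s = ∑ k ∈ range (s + 1), binPMF n p k := by
  simp [binCDF]

lemma binCDF_of_le {n : ℕ} (p : ℝ) {s : ℕ} (hs : n ≤ s) : binCDF n p s = 1 := by
  rw [binCDF_natCast, ← sum_range_binPMF n p,
    ← sum_range_add_sum_Ico _ (by omega : n + 1 ≤ s + 1), add_eq_left]
  refine sum_eq_zero fun k hk => ?_
  simp [binPMF, Nat.choose_eq_zero_of_lt (mem_Ico.mp hk).1]

lemma binPMF_le_binCDF {p : ℝ} (h0 : 0 ≤ p) (h1 : p ≤ 1) (n s : ℕ) :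
    binPMF n p s ≤ binCDF n p s := by
  rw [binCDF_natCast]
  exact single_le_sum (fun k _ => binPMF_nonneg h0 h1 n k) (self_mem_range_succ s)

lemma binCDF_zero (n s : ℕ) : binCDF n 0 s = 1 := by
  rw [binCDF_natCast, sum_eq_single 0] <;> simp +contextual [binPMF]

lemma binCDF_one {n s : ℕ} (hs : s < n) : binCDF n 1 s = 0 := by
  rw [binCDF_natCast]
  refine sum_eq_zero fun k hk => ?_
  have : n - k ≠ 0 := by have := mem_range.mp hk; omega
  simp [binPMF, this]

lemma one_sub_mul_binCDF_le_binCDF_succ {n : ℕ} {p : ℝ} (h0 : 0 ≤ p) (h1 : p ≤ 1) (s : ℕ) :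
    (1 - p) * binCDF n p s ≤ binCDF (n + 1) p s := by
  rw [binCDF_natCast, binCDF_natCast, mul_sum]
  refine sum_le_sum fun k _ => ?_
  rcases lt_or_ge n k with hnk | hkn
  · simpa [binPMF, Nat.choose_eq_zero_of_lt hnk] using binPMF_nonneg h0 h1 (n + 1) k
  have : (n.choose k : ℝ) ≤ (n + 1).choose k := mod_cast Nat.choose_le_succ n k
  have : 0 ≤ 1 - p := by linarith
  unfold binPMF
  calc (1 - p) * (n.choose k * p ^ k * (1 - p) ^ (n - k))
      = n.choose k * p ^ k * (1 - p) ^ (n - k + 1) := by ring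
    _ ≤ (n + 1).choose k * p ^ k * (1 - p) ^ (n + 1 - k) := by
      rw [Nat.sub_add_comm hkn]
      gcongr

lemma hasDerivAt_binPMF_succ (n k : ℕ) (t : ℝ) :
    HasDerivAt (fun u => binPMF (n + 1) u (k + 1))
      ((n + 1) * (binPMF n t k - binPMF n t (k + 1))) t := by
  have hchoose₁ : ((n + 1).choose (k + 1) * (k + 1) : ℝ) = (n + 1) * n.choose k :=
    mod_cast (Nat.add_one_mul_choose_eq n k).symm
  have hchoose₂ :
      ((n + 1).choose (k + 1) * (n - k : ℕ) : ℝ) = n.choose (k + 1) * (n + 1) := by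
    have := Nat.choose_mul_succ_eq n (k + 1)
    rw [Nat.add_sub_add_right] at this
    exact_mod_cast this.symm
  have h := ((hasDerivAt_pow (k + 1) t).fun_mul
    (((hasDerivAt_id' t).const_sub 1).fun_pow (n - k))).const_mul ((n + 1).choose (k + 1) : ℝ)
  have hfun : (fun u => binPMF (n + 1) u (k + 1))
      = fun u => ((n + 1).choose (k + 1) : ℝ) * (u ^ (k + 1) * (1 - u) ^ (n - k)) := by
    ext u; simp only [binPMF, Nat.add_sub_add_right]; ring
  rw [hfun]
  refine h.congr_deriv ?_
  simp only [binPMF, Nat.sub_sub, Nat.add_sub_cancel]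
  push_cast at hchoose₁ hchoose₂ ⊢
  linear_combination (t ^ k * (1 - t) ^ (n - k)) * hchoose₁
    - (t ^ (k + 1) * (1 - t) ^ (n - (k + 1))) * hchoose₂

lemma hasDerivAt_binCDF (n s : ℕ) (t : ℝ) :
    HasDerivAt (fun u => binCDF (n + 1) u s) (-((n + 1) * binPMF n t s)) t := by
  simp only [binCDF_natCast]
  induction s with
  | zero =>
    have h := ((hasDerivAt_id' t).const_sub 1).fun_pow (n + 1)
    simp only [zero_add, sum_range_one, binPMF, Nat.choose_zero_right, pow_zero, Nat.sub_zero,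
      Nat.cast_one, one_mul]
    exact h.congr_deriv (by push_cast; ring)
  | succ s ih =>
    simp only [sum_range_succ _ (s + 1)]
    exact (ih.fun_add (hasDerivAt_binPMF_succ n s t)).congr_deriv (by ring)

lemma integral_binPMF (n s : ℕ) (a b : ℝ) :
    ∫ t in a..b, (n + 1) * binPMF n t s = binCDF (n + 1) a s - binCDF (n + 1) b s := by
  have hcont : Continuous fun t => (n + 1) * binPMF n t s := by unfold binPMF; fun_prop
  rw [intervalIntegral.integral_eq_sub_of_hasDerivAt (f := fun u => -binCDF (n + 1) u s)
    (fun t _ => (hasDerivAt_binCDF n s t).neg.congr_deriv (neg_neg _))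
    (hcont.intervalIntegrable a b)]
  ring

lemma binCDF_antitoneOn (n s : ℕ) :
    AntitoneOn (fun p => binCDF (n + 1) p s) (Set.Icc 0 1) := by
  intro p hp q hq hpq
  have h := integral_binPMF n s p q
  have : 0 ≤ ∫ t in p..q, (n + 1) * binPMF n t s :=
    intervalIntegral.integral_nonneg hpq fun t ht =>
      mul_nonneg (by positivity) (binPMF_nonneg (hp.1.trans ht.1) (ht.2.trans hq.2) n s)
  change binCDF (n + 1) q s ≤ binCDF (n + 1) p s
  linarith

lemma betaPDF_eq_indicator {n s : ℕ} (hs : s ≤ n) :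
    betaPDF (s + 1) (n - s + 1) = (Set.Ioo 0 1).indicator fun t => (n + 1) * binPMF n t s := by
  have hGamma : Real.Gamma ((s + 1 : ℕ) + (n - s + 1 : ℕ)) / (Real.Gamma (s + 1 : ℕ) *
      Real.Gamma (n - s + 1 : ℕ)) = (n + 1) * n.choose s := by
    have hsum : ((s + 1 : ℕ) : ℝ) + (n - s + 1 : ℕ) = (n + 1 : ℕ) + 1 := by
      push_cast [hs]; ring
    have hfact := Nat.choose_mul_factorial_mul_factorial hs
    rw [hsum, Real.Gamma_nat_eq_factorial, Nat.cast_succ s, Real.Gamma_nat_eq_factorial,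
      Nat.cast_succ (n - s), Real.Gamma_nat_eq_factorial, Nat.factorial_succ, ← hfact]
    field_simp
    push_cast
    ring
  ext t
  simp only [betaPDF, Set.indicator, Set.mem_Ioo, hGamma, binPMF, Nat.add_sub_cancel]
  split_ifs <;> ring

lemma betaCDF_eq_one_sub_binCDF {n s : ℕ} (hs : s ≤ n) {y : ℝ} (hy0 : 0 ≤ y) (hy1 : y ≤ 1) :
    betaCDF (s + 1) (n - s + 1) y = 1 - binCDF (n + 1) y s := by
  have hae : (Set.Ioo (0 : ℝ) 1).indicator (fun t => (n + 1) * binPMF n t s)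
      =ᵐ[volume] (Set.Ioc 0 1).indicator fun t => (n + 1) * binPMF n t s :=
    indicator_ae_eq_of_ae_eq_set Ioo_ae_eq_Ioc
  rw [betaCDF, betaPDF_eq_indicator hs, integral_congr_ae (ae_restrict_of_ae hae),
    setIntegral_indicator measurableSet_Ioc, Set.Iic_inter_Ioc_of_le hy1,
    ← intervalIntegral.integral_of_le hy0, integral_binPMF, binCDF_zero]

lemma tsum_min_mul_geometric_le {q : ℝ} (h0 : 0 ≤ q) (h1 : q < 1) (T : ℕ) :
    ∑' k : ℕ, (min k T : ℝ) * q ^ k * (1 - q) ≤ q / (1 - q) := by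
  have hnorm : ‖q‖ < 1 := by rwa [Real.norm_of_nonneg h0]
  have hsum : Summable fun k : ℕ => (k : ℝ) * q ^ k * (1 - q) :=
    ((summable_pow_mul_geometric_of_norm_lt_one 1 hnorm).mul_right (1 - q)).congr
      fun k => by simp
  have hle : ∀ k : ℕ, (min k T : ℝ) * q ^ k * (1 - q) ≤ k * q ^ k * (1 - q) := fun k => by
    have : 0 ≤ 1 - q := by linarith
    gcongr
    exact min_le_left _ _
  have hnonneg : ∀ k : ℕ, 0 ≤ (min k T : ℝ) * q ^ k * (1 - q) := fun k => by
    have : 0 ≤ 1 - q := by linarith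
    positivity
  calc ∑' k : ℕ, (min k T : ℝ) * q ^ k * (1 - q)
      ≤ ∑' k : ℕ, (k : ℝ) * q ^ k * (1 - q) :=
        (hsum.of_nonneg_of_le hnonneg hle).tsum_le_tsum hle hsum
    _ = q / (1 - q) := by
      rw [tsum_mul_right, tsum_coe_mul_geometric_of_norm_lt_one hnorm]
      field_simp [(by linarith : 1 - q ≠ 0)]

lemma geomExpMin_le {j s : ℕ} (hs : s ≤ j) {y : ℝ} (hy0 : 0 < y) (hy1 : y < 1) (T : ℕ) :
    geomExpMin j s y T ≤ 1 / binCDF (j + 1) y s - 1 := by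
  have hF := (binPMF_pos hy0 hy1 (by omega : s ≤ j + 1)).trans_le
    (binPMF_le_binCDF hy0.le hy1.le (j + 1) s)
  have hq := betaCDF_eq_one_sub_binCDF hs hy0.le hy1.le
  have hq0 : 0 ≤ betaCDF (s + 1) (j - s + 1) y := by
    rw [betaCDF, betaPDF_eq_indicator hs]
    refine setIntegral_nonneg measurableSet_Iic fun t _ => Set.indicator_nonneg (fun t ht => ?_) t
    exact mul_nonneg (by positivity) (binPMF_nonneg ht.1.le ht.2.le j s)
  calc geomExpMin j s y T ≤ _ / (1 - _) :=
        tsum_min_mul_geometric_le hq0 (by linarith) T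
    _ = 1 / binCDF (j + 1) y s - 1 := by
      rw [hq, sub_sub_cancel]; field_simp

lemma sum_binPMF_mul_geomExpMin_le {j : ℕ} {y μ : ℝ} (hy0 : 0 < y) (hy1 : y < 1) (hμ0 : 0 ≤ μ)
    (hμ1 : μ ≤ 1) (T : ℕ) :
    ∑ s ∈ range (j + 1), binPMF j μ s * geomExpMin j s y T
      ≤ ∑ s ∈ range (j + 1), binPMF j μ s / binCDF (j + 1) y s - 1 := by
  rw [← sum_range_binPMF j μ, ← sum_sub_distrib]
  refine sum_le_sum fun s hs => ?_
  calc binPMF j μ s * geomExpMin j s y T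
      ≤ binPMF j μ s * (1 / binCDF (j + 1) y s - 1) :=
        mul_le_mul_of_nonneg_left (geomExpMin_le (by simpa [Nat.lt_succ_iff] using hs) hy0 hy1 T)
          (binPMF_nonneg hμ0 hμ1 j s)
    _ = binPMF j μ s / binCDF (j + 1) y s - binPMF j μ s := by ring

lemma choose_mul_pow_le_choose_mul_pow {s M : ℕ} (hM : M ≤ s) :
    ∀ i, i < M → (s + M).choose (s + 1 + i) * s ^ (2 * i + 1)
      ≤ (s + M).choose (s - i) * M ^ (2 * i + 1)
  | 0, _ => by
    have h := Nat.choose_succ_right_eq (s + M) s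
    rw [Nat.add_sub_cancel_left] at h
    simp only [add_zero, mul_zero, zero_add, pow_one, Nat.sub_zero, ← h]
    exact Nat.mul_le_mul_left _ (Nat.le_succ s)
  | i + 1, hi => by
    have ih := choose_mul_pow_le_choose_mul_pow hM i (by omega)
    have hup := Nat.choose_succ_right_eq (s + M) (s + 1 + i)
    have hlow := Nat.choose_succ_right_eq (s + M) (s - (i + 1))
    rw [show s + M - (s + 1 + i) = M - 1 - i by omega] at hup
    rw [show s - (i + 1) + 1 = s - i by omega, show s + M - (s - (i + 1)) = M + i + 1 by omega]
      at hlow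
    have key : (M - 1 - i) * (M + i + 1) * s ^ 2 ≤ (s - i) * (s + 2 + i) * M ^ 2 := by
      zify [(by omega : i ≤ s), (by omega : i ≤ M - 1), (by omega : 1 ≤ M)]
      have hMs : (M : ℤ) ^ 2 ≤ (s : ℤ) ^ 2 := by gcongr
      nlinarith [mul_le_mul_of_nonneg_left hMs (sq_nonneg ((i : ℤ) + 1)),
        (by positivity : (0 : ℤ) ≤ (2 * s + 1) * M ^ 2)]
    refine Nat.le_of_mul_le_mul_right (c := (s + 1 + i + 1) * (M + i + 1)) ?_ (by positivity)
    calc (s + M).choose (s + 1 + (i + 1)) * s ^ (2 * (i + 1) + 1)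
          * ((s + 1 + i + 1) * (M + i + 1))
        = (s + M).choose (s + 1 + i + 1) * (s + 1 + i + 1) * (s ^ (2 * i + 3) * (M + i + 1)) := by
          ring_nf
      _ = (s + M).choose (s + 1 + i) * s ^ (2 * i + 1) * ((M - 1 - i) * (M + i + 1) * s ^ 2) := by
          rw [hup]; ring
      _ ≤ (s + M).choose (s - i) * M ^ (2 * i + 1) * ((s - i) * (s + 2 + i) * M ^ 2) :=
          Nat.mul_le_mul ih key
      _ = (s + M).choose (s - (i + 1)) * (M + i + 1) * (M ^ (2 * i + 3) * (s + 1 + i + 1)) := by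
          rw [← hlow]; ring
      _ = (s + M).choose (s - (i + 1)) * M ^ (2 * (i + 1) + 1)
          * ((s + 1 + i + 1) * (M + i + 1)) := by
          ring_nf

lemma binPMF_succ_add_le_binPMF_sub {s M : ℕ} (hM : M ≤ s) {i : ℕ} (hi : i < M) :
    binPMF (s + M) (s / (s + M)) (s + 1 + i) ≤ binPMF (s + M) (s / (s + M)) (s - i) := by
  have hN : (0 : ℝ) < s + M := by
    have : (0 : ℝ) < M := mod_cast (by omega : 0 < M)
    positivity
  have hq : 1 - (s : ℝ) / (s + M) = M / (s + M) := by field_simp; ring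
  have hchoose : ((s + M).choose (s + 1 + i) : ℝ) * (s / (s + M)) ^ (2 * i + 1)
      ≤ (s + M).choose (s - i) * (M / (s + M)) ^ (2 * i + 1) := by
    rw [div_pow, div_pow, ← mul_div_assoc, ← mul_div_assoc]
    exact div_le_div_of_nonneg_right (mod_cast choose_mul_pow_le_choose_mul_pow hM i hi)
      (by positivity)
  have hpow₁ : ((s : ℝ) / (s + M)) ^ (s + 1 + i)
      = (s / (s + M)) ^ (2 * i + 1) * (s / (s + M)) ^ (s - i) := by
    rw [← pow_add]; congr 1; omega
  have hpow₂ : ((M : ℝ) / (s + M)) ^ (s + M - (s - i))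
      = (M / (s + M)) ^ (2 * i + 1) * (M / (s + M)) ^ (M - 1 - i) := by
    rw [← pow_add]; congr 1; omega
  unfold binPMF
  rw [hq, hpow₁, hpow₂, show s + M - (s + 1 + i) = M - 1 - i by omega]
  calc ((s + M).choose (s + 1 + i) : ℝ) * ((s / (s + M)) ^ (2 * i + 1) * (s / (s + M)) ^ (s - i))
        * (M / (s + M)) ^ (M - 1 - i)
      = (((s + M).choose (s + 1 + i) : ℝ) * (s / (s + M)) ^ (2 * i + 1))
        * ((s / (s + M)) ^ (s - i) * (M / (s + M)) ^ (M - 1 - i)) := by ring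
    _ ≤ ((s + M).choose (s - i) * (M / (s + M)) ^ (2 * i + 1))
        * ((s / (s + M)) ^ (s - i) * (M / (s + M)) ^ (M - 1 - i)) := by gcongr
    _ = _ := by ring

lemma half_le_binCDF_of_le_two_mul {N s : ℕ} (hsN : s ≤ N) (h : N ≤ 2 * s) :
    1 / 2 ≤ binCDF N (s / N) s := by
  obtain ⟨M, rfl⟩ := Nat.exists_eq_add_of_le hsN
  have hM : M ≤ s := by omega
  push_cast
  set p : ℝ := s / (s + M)
  have hp0 : 0 ≤ p := by positivity
  have hp1 : p ≤ 1 := div_le_one_of_le₀ (by simp) (by positivity)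
  have htotal := sum_range_binPMF (s + M) p
  rw [← sum_range_add_sum_Ico _ (by omega : s + 1 ≤ s + M + 1), sum_Ico_eq_sum_range,
    show s + M + 1 - (s + 1) = M by omega] at htotal
  have hupper :
      ∑ i ∈ range M, binPMF (s + M) p (s + 1 + i) ≤ ∑ k ∈ range (s + 1), binPMF (s + M) p k :=
    calc ∑ i ∈ range M, binPMF (s + M) p (s + 1 + i)
        ≤ ∑ i ∈ range M, binPMF (s + M) p (s - i) :=
          sum_le_sum fun i hi => binPMF_succ_add_le_binPMF_sub hM (mem_range.mp hi)
      _ ≤ ∑ i ∈ range (s + 1), binPMF (s + M) p (s + 1 - 1 - i) :=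
          sum_le_sum_of_subset_of_nonneg (range_subset_range.mpr (by omega))
            fun k _ _ => binPMF_nonneg hp0 hp1 _ _
      _ = ∑ k ∈ range (s + 1), binPMF (s + M) p k := sum_range_reflect _ _
  rw [binCDF_natCast]
  linarith

-- The derivative of `t ↦ log (g (p + t) / g (p - t))` for `g t = t ^ a * (1 - t) ^ b`;
-- `he` says that `p = a / (a + b + 1)`.
lemma reflect_log_deriv_nonneg {a b p x : ℝ} (ha : 0 ≤ a) (hp : 2 * p ≤ 1)
    (he : a * (1 - p) = (b + 1) * p) (hx0 : 0 ≤ x) (hxp : x < p) :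
    0 ≤ a / (p + x) - b / (1 - p - x) + a / (p - x) - b / (1 - p + x) := by
  have hx2 : x ^ 2 ≤ p ^ 2 := by nlinarith
  have key : 0 ≤ a * p * ((1 - p) ^ 2 - x ^ 2) - b * (1 - p) * (p ^ 2 - x ^ 2) := by
    rcases le_or_gt (a * p) (b * (1 - p)) with hc | hc
    · nlinarith [mul_nonneg (sq_nonneg x) (sub_nonneg.mpr hc)]
    · nlinarith [mul_le_mul_of_nonneg_right hx2 (sub_nonneg.mpr hc.le),
        mul_nonneg (mul_nonneg ha (hx0.trans hxp.le)) (by linarith : (0 : ℝ) ≤ 1 - 2 * p)]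
  have : a / (p + x) - b / (1 - p - x) + a / (p - x) - b / (1 - p + x)
      = 2 * (a * p * ((1 - p) ^ 2 - x ^ 2) - b * (1 - p) * (p ^ 2 - x ^ 2))
        / ((p + x) * (p - x) * ((1 - p - x) * (1 - p + x))) := by
    field_simp [(by linarith : p + x ≠ 0), (by linarith : p - x ≠ 0),
      (by linarith : 1 - p - x ≠ 0), (by linarith : 1 - p + x ≠ 0)]
    ring
  rw [this]
  refine div_nonneg (by linarith) (mul_nonneg (mul_nonneg ?_ ?_) (mul_nonneg ?_ ?_)) <;> linarith

lemma log_reflect_le {a b p x : ℝ} (ha : 0 ≤ a) (hp : 2 * p ≤ 1)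
    (he : a * (1 - p) = (b + 1) * p) (hx0 : 0 ≤ x) (hxp : x < p) :
    a * log (p - x) + b * log (1 - p + x) ≤ a * log (p + x) + b * log (1 - p - x) := by
  set H : ℝ → ℝ := fun t => a * log (p + t) + b * log (1 - p - t) - a * log (p - t)
    - b * log (1 - p + t)
  have hderiv : ∀ t ∈ Set.Icc 0 x, HasDerivAt H
      (a / (p + t) - b / (1 - p - t) + a / (p - t) - b / (1 - p + t)) t := by
    rintro t ⟨ht0, htx⟩
    have h₁ := ((hasDerivAt_id' t).const_add p).log (by linarith)
    have h₂ := ((hasDerivAt_id' t).const_sub (1 - p)).log (by linarith)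
    have h₃ := ((hasDerivAt_id' t).const_sub p).log (by linarith)
    have h₄ := ((hasDerivAt_id' t).const_add (1 - p)).log (by linarith)
    refine ((((h₁.const_mul a).add (h₂.const_mul b)).sub
      (h₃.const_mul a)).sub (h₄.const_mul b)).congr_deriv ?_
    ring
  have hmono : MonotoneOn H (Set.Icc 0 x) :=
    monotoneOn_of_hasDerivWithinAt_nonneg (convex_Icc 0 x)
      (fun t ht => (hderiv t ht).continuousAt.continuousWithinAt)
      (fun t ht => (hderiv t (interior_subset ht)).hasDerivWithinAt)
      fun t ht => by
        rw [interior_Icc] at ht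
        exact reflect_log_deriv_nonneg ha hp he ht.1.le (ht.2.trans hxp)
  have hH : H 0 ≤ H x := hmono ⟨le_rfl, hx0⟩ ⟨hx0, le_rfl⟩ hx0
  simp only [H, add_zero, sub_zero] at hH
  linarith

lemma pow_mul_pow_sub_le_pow_mul_pow_add {a b : ℕ} {p x : ℝ} (hp : 2 * p ≤ 1)
    (he : a * (1 - p) = (b + 1) * p) (hx0 : 0 ≤ x) (hxp : x ≤ p) :
    (p - x) ^ a * (1 - (p - x)) ^ b ≤ (p + x) ^ a * (1 - (p + x)) ^ b := by
  rcases hx0.eq_or_lt with rfl | hx0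
  · simp
  rw [show 1 - (p - x) = 1 - p + x by ring, show 1 - (p + x) = 1 - p - x by ring]
  rcases hxp.eq_or_lt with rfl | hxp
  · have : a ≠ 0 := by
      rintro rfl
      rw [Nat.cast_zero, zero_mul] at he
      nlinarith [mul_pos (by positivity : (0 : ℝ) < b + 1) hx0]
    rw [sub_self, zero_pow this, zero_mul]
    exact mul_nonneg (pow_nonneg (by linarith) _) (pow_nonneg (by linarith) _)
  have hpx : 0 < p + x := by linarith
  have hpmx : 0 < p - x := by linarith
  have hqmx : 0 < 1 - p - x := by linarith
  have hqx : 0 < 1 - p + x := by linarith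
  rw [← log_le_log_iff (by positivity) (by positivity), log_mul (by positivity) (by positivity),
    log_mul (by positivity) (by positivity), log_pow, log_pow, log_pow, log_pow]
  exact log_reflect_le (Nat.cast_nonneg a) hp he hx0.le hxp

lemma binPMF_sub_le_binPMF_add {n s : ℕ} (h : 2 * s ≤ n + 1) {x : ℝ} (hx0 : 0 ≤ x)
    (hx : x ≤ s / (n + 1)) :
    binPMF n (s / (n + 1) - x) s ≤ binPMF n (s / (n + 1) + x) s := by
  have hp : 2 * ((s : ℝ) / (n + 1)) ≤ 1 := by
    rw [← mul_div_assoc, div_le_one (by positivity)]; exact_mod_cast h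
  have he : (s : ℝ) * (1 - s / (n + 1)) = ((n - s : ℕ) + 1) * (s / (n + 1)) := by
    rw [Nat.cast_sub (by omega)]; field_simp; ring
  unfold binPMF
  rw [mul_assoc, mul_assoc]
  exact mul_le_mul_of_nonneg_left (pow_mul_pow_sub_le_pow_mul_pow_add hp he hx0 hx)
    (Nat.cast_nonneg _)

lemma half_le_binCDF_of_two_mul_le {n s : ℕ} (h : 2 * s ≤ n + 1) :
    1 / 2 ≤ binCDF (n + 1) (s / (n + 1)) s := by
  set p : ℝ := s / (n + 1)
  set g : ℝ → ℝ := fun t => (n + 1) * binPMF n t s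
  have hp0 : 0 ≤ p := by positivity
  have hp : 2 * p ≤ 1 := by
    rw [← mul_div_assoc, div_le_one (by positivity)]; exact_mod_cast h
  have hg : Continuous g := by simp only [g, binPMF]; fun_prop
  have hlower : 1 - binCDF (n + 1) p s = ∫ t in (0 : ℝ)..p, g t := by
    rw [integral_binPMF, binCDF_zero]
  have hupper : binCDF (n + 1) p s = ∫ t in p..1, g t := by
    rw [integral_binPMF, binCDF_one (by omega), sub_zero]
  have hreflect : ∫ t in (0 : ℝ)..p, g t ≤ ∫ t in p..2 * p, g t := by
    have hleft : ∫ t in (0 : ℝ)..p, g t = ∫ x in (0 : ℝ)..p, g (p - x) := by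
      rw [intervalIntegral.integral_comp_sub_left g p, sub_self, sub_zero]
    have hright : ∫ x in (0 : ℝ)..p, g (p + x) = ∫ t in p..2 * p, g t := by
      rw [intervalIntegral.integral_comp_add_left g p, add_zero, two_mul]
    rw [hleft, ← hright]
    refine intervalIntegral.integral_mono_on hp0 ((hg.comp (by fun_prop)).intervalIntegrable _ _)
      ((hg.comp (by fun_prop)).intervalIntegrable _ _) fun x hx => ?_
    exact mul_le_mul_of_nonneg_left (binPMF_sub_le_binPMF_add h hx.1 hx.2) (by positivity)
  have htail : ∫ t in p..2 * p, g t ≤ ∫ t in p..1, g t := by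
    rw [← intervalIntegral.integral_add_adjacent_intervals (hg.intervalIntegrable p (2 * p))
      (hg.intervalIntegrable (2 * p) 1), le_add_iff_nonneg_right]
    exact intervalIntegral.integral_nonneg hp fun t ht =>
      mul_nonneg (by positivity) (binPMF_nonneg (by linarith [ht.1]) ht.2 n s)
  linarith

lemma half_le_binCDF {n s : ℕ} {p : ℝ} (hp : 0 ≤ p) (hsn : s ≤ n) (hnp : n * p ≤ s) :
    1 / 2 ≤ binCDF n p s := by
  rcases hsn.eq_or_lt with rfl | hlt
  · rw [binCDF_of_le p le_rfl]; norm_num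
  obtain ⟨m, rfl⟩ : ∃ m, n = m + 1 := ⟨n - 1, by omega⟩
  push_cast at hnp
  have hp_le : p ≤ s / (m + 1) := by rw [le_div_iff₀ (by positivity)]; linarith
  have hmean_le : (s : ℝ) / (m + 1) ≤ 1 := by
    rw [div_le_one (by positivity)]; exact_mod_cast hlt.le
  refine le_trans ?_ (binCDF_antitoneOn m s ⟨hp, hp_le.trans hmean_le⟩
    ⟨by positivity, hmean_le⟩ hp_le)
  rcases le_total (2 * s) (m + 1) with h | h
  · exact half_le_binCDF_of_two_mul_le h
  · simpa using half_le_binCDF_of_le_two_mul hlt.le h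

lemma binPMF_mul_one_sub_le {j s : ℕ} (hs : s ≤ j) {y μ : ℝ} (hy0 : 0 < y) (hy1 : y < 1)
    (hμ0 : 0 ≤ μ) (hμ1 : μ ≤ 1) :
    binPMF j μ s * (1 - y)
      ≤ binPMF (j + 1) y s * ((μ / y) ^ s * ((1 - μ) / (1 - y)) ^ (j - s)) := by
  have hchoose : (j.choose s : ℝ) ≤ (j + 1).choose s := mod_cast Nat.choose_le_succ j s
  have : 0 ≤ 1 - μ := by linarith
  calc binPMF j μ s * (1 - y) = j.choose s * (μ ^ s * (1 - μ) ^ (j - s) * (1 - y)) := by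
        unfold binPMF; ring
    _ ≤ (j + 1).choose s * (μ ^ s * (1 - μ) ^ (j - s) * (1 - y)) := by
        gcongr
    _ = _ := by
        unfold binPMF
        rw [show j + 1 - s = j - s + 1 by omega, div_pow, div_pow]
        field_simp [(by linarith : 1 - y ≠ 0)]
        ring

lemma sum_range_pow_mul_pow_le {a b : ℝ} (hb : 0 ≤ b) (hab : b < a) {m j : ℕ} (hm : m ≤ j) :
    ∑ s ∈ range (m + 1), a ^ s * b ^ (j - s) ≤ a ^ (m + 1) * b ^ (j - m) / (a - b) := by
  have hgeom := geom_sum₂_mul a b (m + 1)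
  rw [le_div_iff₀ (by linarith)]
  calc (∑ s ∈ range (m + 1), a ^ s * b ^ (j - s)) * (a - b)
      = b ^ (j - m) * ((∑ s ∈ range (m + 1), a ^ s * b ^ (m + 1 - 1 - s)) * (a - b)) := by
        rw [← mul_assoc, mul_sum]
        congr 1
        refine sum_congr rfl fun s hs => ?_
        rw [show j - s = (j - m) + (m + 1 - 1 - s) by have := mem_range.mp hs; omega, pow_add]
        ring
    _ = b ^ (j - m) * (a ^ (m + 1) - b ^ (m + 1)) := by rw [hgeom]
    _ ≤ a ^ (m + 1) * b ^ (j - m) := by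
        nlinarith [pow_nonneg hb (m + 1), pow_nonneg hb (j - m)]

lemma sum_range_binPMF_div_binCDF_le {j m : ℕ} (hm : m ≤ j) {y μ : ℝ} (hy0 : 0 < y) (hyμ : y < μ)
    (hμ1 : μ ≤ 1) :
    ∑ s ∈ range (m + 1), binPMF j μ s / binCDF (j + 1) y s
      ≤ μ / (μ - y) * ((μ / y) ^ m * ((1 - μ) / (1 - y)) ^ (j - m)) := by
  have hy1 : y < 1 := hyμ.trans_le hμ1
  have h1y : 0 < 1 - y := by linarith
  set a := μ / y
  set b := (1 - μ) / (1 - y)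
  have hb : 0 ≤ b := div_nonneg (by linarith) h1y.le
  have hab : b < a := by
    calc b ≤ 1 := div_le_one_of_le₀ (by linarith) h1y.le
      _ < a := by rw [lt_div_iff₀ hy0]; linarith
  calc ∑ s ∈ range (m + 1), binPMF j μ s / binCDF (j + 1) y s
      ≤ ∑ s ∈ range (m + 1), a ^ s * b ^ (j - s) / (1 - y) := by
        refine sum_le_sum fun s hs => ?_
        have hsj : s ≤ j := by have := mem_range.mp hs; omega
        have hpmf := binPMF_pos hy0 hy1 (by omega : s ≤ j + 1)
        rw [le_div_iff₀ h1y, div_mul_eq_mul_div, div_le_iff₀ (hpmf.trans_le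
          (binPMF_le_binCDF hy0.le hy1.le _ _))]
        calc binPMF j μ s * (1 - y) ≤ binPMF (j + 1) y s * (a ^ s * b ^ (j - s)) :=
              binPMF_mul_one_sub_le hsj hy0 hy1 (by linarith) hμ1
          _ ≤ a ^ s * b ^ (j - s) * binCDF (j + 1) y s := by
              rw [mul_comm]
              exact mul_le_mul_of_nonneg_left (binPMF_le_binCDF hy0.le hy1.le _ _)
                (mul_nonneg (pow_nonneg (hb.trans hab.le) _) (pow_nonneg hb _))
    _ = (∑ s ∈ range (m + 1), a ^ s * b ^ (j - s)) / (1 - y) := by rw [sum_div]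
    _ ≤ a ^ (m + 1) * b ^ (j - m) / (a - b) / (1 - y) := by
        gcongr; exact sum_range_pow_mul_pow_le hb hab hm
    _ = μ / (μ - y) * (a ^ m * b ^ (j - m)) := by
        have : a - b = (μ - y) / (y * (1 - y)) := by
          simp only [a, b]; field_simp; ring
        rw [this, pow_succ]
        simp only [a]
        field_simp [(by linarith : μ - y ≠ 0)]

lemma sum_Ico_binPMF_div_binCDF_le {j m : ℕ} {y μ : ℝ} (hy0 : 0 < y) (hy1 : y < 1) (hμ0 : 0 ≤ μ)
    (hμ1 : μ ≤ 1) (hm : y * j < m + 1) :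
    ∑ s ∈ Ico (m + 1) (j + 1), binPMF j μ s / binCDF (j + 1) y s ≤ 2 / (1 - y) := by
  have h1y : 0 < 1 - y := by linarith
  calc ∑ s ∈ Ico (m + 1) (j + 1), binPMF j μ s / binCDF (j + 1) y s
      ≤ ∑ s ∈ Ico (m + 1) (j + 1), 2 / (1 - y) * binPMF j μ s := by
        refine sum_le_sum fun s hs => ?_
        obtain ⟨hms, hsj⟩ := mem_Ico.mp hs
        have hs_real : (m : ℝ) + 1 ≤ s := mod_cast hms
        have hmedian := half_le_binCDF hy0.le (by omega : s ≤ j) (by linarith)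
        have hF : (1 - y) / 2 ≤ binCDF (j + 1) y s := by
          nlinarith [one_sub_mul_binCDF_le_binCDF_succ (n := j) hy0.le hy1.le s]
        rw [div_le_iff₀ (by linarith), mul_comm (2 / (1 - y)), mul_assoc]
        refine le_mul_of_one_le_right (binPMF_nonneg hμ0 hμ1 j s) ?_
        rw [div_mul_eq_mul_div, le_div_iff₀ h1y]
        linarith
    _ = 2 / (1 - y) * ∑ s ∈ Ico (m + 1) (j + 1), binPMF j μ s := by rw [mul_sum]
    _ ≤ 2 / (1 - y) * ∑ s ∈ range (j + 1), binPMF j μ s := by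
        gcongr
        · exact fun s _ _ => binPMF_nonneg hμ0 hμ1 j s
        · exact fun s hs => mem_range.mpr (mem_Ico.mp hs).2
    _ = 2 / (1 - y) := by rw [sum_range_binPMF, mul_one]

-- Also true at `x = 0` because `log 0 = 0`: this covers `μ₁ = 1` below.
lemma pow_le_exp_mul_log {x : ℝ} (hx : 0 ≤ x) (n : ℕ) : x ^ n ≤ exp (n * log x) := by
  rcases hx.eq_or_lt with rfl | hx
  · rcases n.eq_zero_or_pos with rfl | hn
    · simp
    · rw [zero_pow hn.ne']; positivity
  · rw [exp_nat_mul, exp_log hx]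

lemma pow_mul_pow_le_exp_neg_kl {y μ : ℝ} (hy0 : 0 < y) (hyμ : y < μ) (hμ1 : μ ≤ 1)
    {j m : ℕ} (hmj : m ≤ j) (hm : (m : ℝ) ≤ y * j) :
    (μ / y) ^ m * ((1 - μ) / (1 - y)) ^ (j - m)
      ≤ exp (-(y * log (y / μ) + (1 - y) * log ((1 - y) / (1 - μ))) * j) := by
  have hy1 : y < 1 := hyμ.trans_le hμ1
  have hb0 : 0 ≤ (1 - μ) / (1 - y) := div_nonneg (by linarith) (by linarith)
  have hlog_a : 0 < log (μ / y) := log_pos (by rw [one_lt_div hy0]; linarith)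
  have hlog_b : log ((1 - μ) / (1 - y)) ≤ 0 :=
    log_nonpos hb0 (div_le_one_of_le₀ (by linarith) (by linarith))
  calc (μ / y) ^ m * ((1 - μ) / (1 - y)) ^ (j - m)
      ≤ exp (m * log (μ / y)) * exp ((j - m : ℕ) * log ((1 - μ) / (1 - y))) :=
        mul_le_mul (pow_le_exp_mul_log (div_pos (by linarith) hy0).le m)
          (pow_le_exp_mul_log hb0 _) (by positivity) (by positivity)
    _ ≤ _ := by
        rw [← exp_add, exp_le_exp, ← inv_div μ y, log_inv, ← inv_div (1 - μ), log_inv,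
          Nat.cast_sub hmj]
        nlinarith [mul_nonneg (sub_nonneg.mpr hm) (sub_nonneg.mpr (hlog_b.trans hlog_a.le))]

theorem small_j_bound_general (y μ₁ Δ' D : ℝ) (hy : 0 < y) (hyμ : y < μ₁) (hμ : μ₁ ≤ 1)
    (hΔ : Δ' = μ₁ - y)
    (hD : D = y * Real.log (y / μ₁) + (1 - y) * Real.log ((1 - y) / (1 - μ₁)))
    (T : ℕ) (j : ℕ) :
    ∑ s ∈ Finset.range (j + 1), binPMF j μ₁ s * geomExpMin j s y T ≤
      1 + 2 / (1 - y) + (μ₁ / Δ') * Real.exp (-D * j) := by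
  have hy1 : y < 1 := hyμ.trans_le hμ
  set m := ⌊y * j⌋₊
  have hm_le : (m : ℝ) ≤ y * j := Nat.floor_le (by positivity)
  have hm_lt : y * j < m + 1 := Nat.lt_floor_add_one _
  have hmj : m ≤ j := by
    have : y * j ≤ j := by nlinarith [(Nat.cast_nonneg j : (0 : ℝ) ≤ j)]
    exact_mod_cast hm_le.trans this
  have hlow := sum_range_binPMF_div_binCDF_le hmj hy hyμ hμ
  have hkl := pow_mul_pow_le_exp_neg_kl hy hyμ hμ hmj hm_le
  have hhigh := sum_Ico_binPMF_div_binCDF_le (μ := μ₁) hy hy1 (by linarith) hμ hm_lt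
  have hμy : 0 ≤ μ₁ / (μ₁ - y) := div_nonneg (by linarith) (by linarith)
  calc ∑ s ∈ range (j + 1), binPMF j μ₁ s * geomExpMin j s y T
      ≤ ∑ s ∈ range (j + 1), binPMF j μ₁ s / binCDF (j + 1) y s - 1 :=
        sum_binPMF_mul_geomExpMin_le hy hy1 (by linarith) hμ T
    _ ≤ μ₁ / (μ₁ - y) * exp (-D * j) + 2 / (1 - y) - 1 := by
        rw [← sum_range_add_sum_Ico _ (by omega : m + 1 ≤ j + 1), hD]
        linarith [mul_le_mul_of_nonneg_left hkl hμy]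
    _ ≤ 1 + 2 / (1 - y) + (μ₁ / Δ') * exp (-D * j) := by rw [hΔ]; linarith

/-- for `0 < y < μ₁ ≤ 1`, `Δ' = μ₁ − y`, `R = μ₁(1−y)/(y(1−μ₁))`,
`D` the KL divergence between `Bernoulli(y)` and `Bernoulli(μ₁)`, and any
nonnegative integer `j < (y/D) ln R`, taking `s(j) ~ Binomial(j, μ₁)`,
`E[ E[min{X(j,s(j),y), T} | s(j)] ] ≤ 1 + 2/(1−y) + (μ₁/Δ') e^{−Dj}`. -/
theorem small_j_bound (y μ₁ Δ' R D : ℝ) (hy : 0 < y) (hyμ : y < μ₁) (hμ : μ₁ ≤ 1)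
    (hΔ : Δ' = μ₁ - y) (hR : R = μ₁ * (1 - y) / (y * (1 - μ₁)))
    (hD : D = y * Real.log (y / μ₁) + (1 - y) * Real.log ((1 - y) / (1 - μ₁)))
    (T : ℕ) (hT : 1 ≤ T) (j : ℕ) (hj : (j : ℝ) < (y / D) * Real.log R) :
    ∑ s ∈ Finset.range (j + 1), binPMF j μ₁ s * geomExpMin j s y T ≤
      1 + 2 / (1 - y) + (μ₁ / Δ') * Real.exp (-D * j) :=
  small_j_bound_general y μ₁ Δ' D hy hyμ hμ hΔ hD T j
end

section
/- For 0 < y_a < μ₁ < 1 with Δ_a/2 = μ₁ − y_a, let s(j) ~ Binomial(j, μ₁) for each j, and let j* be any random index in {0,…,T−1} determined by the sequence s(·). Then E[(1/F^{B}_{j*+1, y_a}(s(j*))) · I(s(j*) ≤ ⌊y_a j*⌋)] ≤ ∑_{j=0}^{T−1} ∑_{s=0}^{⌊y_a j⌋} f^{B}_{j,μ₁}(s)/F^{B}_{j+1,y_a}(s) ≤ ∑_{j≥0} (μ₁/(Δ_a/2)) e^{−D_a j} ≤ 16/Δ_a³, where D_a is the KL divergence between Bernoulli(y_a) and Bernoulli(μ₁).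 -/
/-!
The first inequality is a union bound: the integrand at the random index `j*` is one term of
the sum over all `j < T`, and `ℙ (s j = k) = f^B_{j,μ₁}(k)`. For the second, bound the CDF
below by its last term; the likelihood ratio `f^B_{j,μ₁}(k) / f^B_{j+1,y}(k)` is at most
`a^k b^(j-k) / (1-y)` with `a = μ₁/y > 1 > b = (1-μ₁)/(1-y)`, so the sum over `k ≤ ⌊y j⌋` is
dominated by its top term, and `a^(y j) b^((1-y) j) = e^(-D j)`. For the third, sum the geometric
series, use `1 - e^(-D) ≥ min D 1 / 2`, and Pinsker's inequality `D ≥ 2 (μ₁ - y)² = Δ²/2`.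
-/

open MeasureTheory Real

open Finset

/-- `KL(Ber p ‖ Ber q)`; the paper's `D_a` is `klBernoulli y_a μ₁`. -/
noncomputable def klBernoulli (p q : ℝ) : ℝ :=
  p * log (p / q) + (1 - p) * log ((1 - p) / (1 - q))

section Binomial

variable {p q : ℝ}

lemma binPMF_nonneg_s18 (n : ℕ) (hp0 : 0 ≤ p) (hp1 : p ≤ 1) (k : ℕ) : 0 ≤ binPMF n p k := by
  have : 0 ≤ 1 - p := by linarith
  unfold binPMF
  positivity

lemma binPMF_pos_s18 {n k : ℕ} (hp0 : 0 < p) (hp1 : p < 1) (hk : k ≤ n) : 0 < binPMF n p k := by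
  have : 0 < 1 - p := by linarith
  have : 0 < (n.choose k : ℝ) := by exact_mod_cast Nat.choose_pos hk
  unfold binPMF
  positivity

lemma binCDF_nonneg (n : ℕ) (hp0 : 0 ≤ p) (hp1 : p ≤ 1) (s : ℤ) : 0 ≤ binCDF n p s :=
  sum_nonneg fun k _ => binPMF_nonneg_s18 n hp0 hp1 k

lemma binPMF_le_binCDF_s18 (n : ℕ) (hp0 : 0 ≤ p) (hp1 : p ≤ 1) (k : ℕ) :
    binPMF n p k ≤ binCDF n p k := by
  unfold binCDF
  exact single_le_sum (fun i _ => binPMF_nonneg_s18 n hp0 hp1 i) (by simp)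

lemma one_sub_mul_binPMF_le (hp0 : 0 < p) (hp1 : p < 1) (hq0 : 0 ≤ q) (hq1 : q ≤ 1)
    {j k : ℕ} (hk : k ≤ j) :
    (1 - p) * binPMF j q k ≤ (q / p) ^ k * ((1 - q) / (1 - p)) ^ (j - k) * binPMF (j + 1) p k := by
  obtain ⟨t, rfl⟩ := Nat.exists_eq_add_of_le hk
  have hp : p ≠ 0 := hp0.ne'
  have h1p : 1 - p ≠ 0 := by linarith
  have : 0 ≤ 1 - q := by linarith
  have hchoose : ((k + t).choose k : ℝ) ≤ ((k + t + 1).choose k : ℝ) := by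
    exact_mod_cast Nat.choose_le_succ (k + t) k
  simp only [binPMF, Nat.add_sub_cancel_left, show k + t + 1 - k = t + 1 by omega]
  calc (1 - p) * (((k + t).choose k : ℝ) * q ^ k * (1 - q) ^ t)
      ≤ (1 - p) * (((k + t + 1).choose k : ℝ) * q ^ k * (1 - q) ^ t) := by gcongr
    _ = _ := by
        rw [div_pow, div_pow, pow_succ]
        field_simp

lemma binPMF_div_binCDF_succ_le (hp0 : 0 < p) (hp1 : p < 1) (hq0 : 0 ≤ q) (hq1 : q ≤ 1)
    {j k : ℕ} (hk : k ≤ j) :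
    binPMF j q k / binCDF (j + 1) p k ≤ (q / p) ^ k * ((1 - q) / (1 - p)) ^ (j - k) / (1 - p) := by
  have hpmf : 0 < binPMF (j + 1) p k := binPMF_pos_s18 hp0 hp1 (by omega)
  calc binPMF j q k / binCDF (j + 1) p k ≤ binPMF j q k / binPMF (j + 1) p k :=
        div_le_div_of_nonneg_left (binPMF_nonneg_s18 j hq0 hq1 k) hpmf
          (binPMF_le_binCDF_s18 _ hp0.le hp1.le k)
    _ ≤ _ := by
        rw [div_le_div_iff₀ hpmf (by linarith), mul_comm _ (1 - p)]
        exact one_sub_mul_binPMF_le hp0 hp1 hq0 hq1 hk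

end Binomial

lemma sum_range_pow_mul_pow_sub_le {a b : ℝ} (hb : 0 ≤ b) (hba : b < a) {m j : ℕ} (hmj : m ≤ j) :
    ∑ k ∈ range (m + 1), a ^ k * b ^ (j - k) ≤ a / (a - b) * (a ^ m * b ^ (j - m)) := by
  have ha : 0 < a := hb.trans_lt hba
  have hterm : ∀ k ∈ range (m + 1),
      a ^ k * b ^ (j - k) = a ^ m * b ^ (j - m) * (b / a) ^ (m - k) := by
    intro k hk
    obtain ⟨u, rfl⟩ := Nat.exists_eq_add_of_le (Nat.lt_succ_iff.1 (mem_range.1 hk))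
    obtain ⟨v, rfl⟩ := Nat.exists_eq_add_of_le hmj
    rw [show k + u + v - k = u + v by omega, Nat.add_sub_cancel_left, Nat.add_sub_cancel_left,
      div_pow, pow_add, pow_add]
    field_simp [ha.ne']
  have hreflect : ∑ k ∈ range (m + 1), (b / a) ^ (m - k) = ∑ i ∈ range (m + 1), (b / a) ^ i := by
    simpa using sum_range_reflect (fun i => (b / a) ^ i) (m + 1)
  have hgeom : ∑ i ∈ range (m + 1), (b / a) ^ i ≤ a / (a - b) := by
    have := geom_sum_Ico_le_of_lt_one (m := 0) (n := m + 1) (div_nonneg hb ha.le)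
      ((div_lt_one ha).2 hba)
    rwa [pow_zero, Nat.Ico_zero_eq_range, one_sub_div ha.ne', one_div_div] at this
  rw [sum_congr rfl hterm, ← mul_sum, hreflect, mul_comm (a / (a - b))]
  gcongr

lemma pow_mul_pow_sub_le_exp {a b y : ℝ} (ha : 1 ≤ a) (hb0 : 0 < b) (hb1 : b ≤ 1) {m j : ℕ}
    (hmj : m ≤ j) (hm : (m : ℝ) ≤ y * j) :
    a ^ m * b ^ (j - m) ≤ exp (j * (y * log a + (1 - y) * log b)) := by
  have hlog : a ^ m * b ^ (j - m) = exp (m * log a + (j - m : ℕ) * log b) := by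
    rw [exp_add, exp_nat_mul, exp_nat_mul, exp_log (by linarith), exp_log hb0]
  rw [hlog, Nat.cast_sub hmj, exp_le_exp]
  have hab : log b ≤ log a := (log_le_log hb0 (hb1.trans ha))
  nlinarith [mul_nonneg (sub_nonneg.2 hm) (sub_nonneg.2 hab)]

lemma neg_klBernoulli (p q : ℝ) :
    -klBernoulli p q = p * log (q / p) + (1 - p) * log ((1 - q) / (1 - p)) := by
  simp only [klBernoulli, ← inv_div q p, ← inv_div (1 - q) (1 - p), log_inv]
  ring

lemma sum_binPMF_div_binCDF_le {p q : ℝ} (hp0 : 0 < p) (hpq : p < q) (hq1 : q < 1) (j : ℕ) :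
    ∑ k ∈ range (⌊p * j⌋₊ + 1), binPMF j q k / binCDF (j + 1) p k
      ≤ q / (q - p) * exp (-klBernoulli p q * j) := by
  set m := ⌊p * j⌋₊
  have hm : (m : ℝ) ≤ p * j := Nat.floor_le (by positivity)
  have hmj : m ≤ j := by
    have : p * j ≤ j := by nlinarith [(Nat.cast_nonneg j : (0 : ℝ) ≤ j)]
    exact_mod_cast hm.trans this
  have hp1 : p < 1 := hpq.trans hq1
  have hq0 : 0 < q := hp0.trans hpq
  set a := q / p
  set b := (1 - q) / (1 - p)
  have ha : 1 < a := (one_lt_div hp0).2 hpq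
  have hb0 : 0 < b := div_pos (by linarith) (by linarith)
  have hb1 : b < 1 := (div_lt_one (by linarith)).2 (by linarith)
  have h1p : 0 < 1 - p := by linarith
  have hconst : a / (a - b) / (1 - p) = q / (q - p) := by
    have : a - b = (q - p) / (p * (1 - p)) := by
      simp only [a, b]
      field_simp [hp0.ne', h1p.ne']
      ring
    rw [this]
    simp only [a]
    field_simp [hp0.ne', h1p.ne', (sub_pos.2 hpq).ne']
  calc ∑ k ∈ range (m + 1), binPMF j q k / binCDF (j + 1) p k
      ≤ ∑ k ∈ range (m + 1), a ^ k * b ^ (j - k) / (1 - p) :=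
        sum_le_sum fun k hk => binPMF_div_binCDF_succ_le hp0 hp1 hq0.le hq1.le
          (by have := mem_range.1 hk; omega)
    _ = (∑ k ∈ range (m + 1), a ^ k * b ^ (j - k)) / (1 - p) := by rw [sum_div]
    _ ≤ a / (a - b) * (a ^ m * b ^ (j - m)) / (1 - p) := by
        gcongr
        exact sum_range_pow_mul_pow_sub_le hb0.le (hb1.trans ha) hmj
    _ ≤ a / (a - b) * exp (j * (p * log a + (1 - p) * log b)) / (1 - p) := by
        have : 0 ≤ a / (a - b) := div_nonneg (by linarith) (by linarith)
        gcongr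
        exact pow_mul_pow_sub_le_exp ha.le hb0 hb1.le hmj hm
    _ = q / (q - p) * exp (-klBernoulli p q * j) := by
        rw [← hconst, neg_klBernoulli, mul_comm _ (j : ℝ), mul_div_right_comm]

section Pinsker

variable {p q : ℝ}

lemma klBernoulli_self (p : ℝ) : klBernoulli p p = 0 := by
  by_cases hp : p = 0
  · simp [klBernoulli, hp]
  by_cases hp1 : 1 - p = 0
  · simp [klBernoulli, hp1]
  simp [klBernoulli, div_self hp, div_self hp1]

lemma klBernoulli_one_sub (p q : ℝ) : klBernoulli (1 - p) (1 - q) = klBernoulli p q := by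
  simp only [klBernoulli, sub_sub_cancel]
  ring

lemma hasDerivAt_klBernoulli {t : ℝ} (hp0 : 0 < p) (hp1 : p < 1) (ht0 : 0 < t) (ht1 : t < 1) :
    HasDerivAt (klBernoulli p) ((t - p) / (t * (1 - t))) t := by
  have h1p : 0 < 1 - p := by linarith
  have h1t : 0 < 1 - t := by linarith
  have hlog₁ := ((hasDerivAt_const t p).div (hasDerivAt_id t) ht0.ne').log
    (div_pos hp0 ht0).ne'
  have hlog₂ := ((hasDerivAt_const t (1 - p)).div ((hasDerivAt_id t).const_sub 1) h1t.ne').log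
    (div_pos h1p h1t).ne'
  refine ((hlog₁.const_mul p).add (hlog₂.const_mul (1 - p))).congr_deriv ?_
  simp only [Pi.div_apply, id]
  field_simp
  ring

lemma two_mul_sq_sub_le_klBernoulli_of_le (hp0 : 0 < p) (hpq : p ≤ q) (hq1 : q < 1) :
    2 * (q - p) ^ 2 ≤ klBernoulli p q := by
  have hp1 : p < 1 := hpq.trans_lt hq1
  let f : ℝ → ℝ := fun t => klBernoulli p t - 2 * (t - p) ^ 2
  have hderiv : ∀ t ∈ Set.Icc p q,
      HasDerivAt f ((t - p) / (t * (1 - t)) - 2 * (2 * (t - p))) t := by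
    intro t ht
    have hsq : HasDerivAt (fun t => (t - p) ^ 2) (2 * (t - p)) t :=
      (((hasDerivAt_id' t).sub_const p).pow 2).congr_deriv (by norm_num)
    exact (hasDerivAt_klBernoulli hp0 hp1 (hp0.trans_le ht.1) (ht.2.trans_lt hq1)).sub
      (hsq.const_mul 2)
  have hmono : MonotoneOn f (Set.Icc p q) := by
    refine monotoneOn_of_hasDerivWithinAt_nonneg (convex_Icc p q)
      (fun t ht => (hderiv t ht).continuousAt.continuousWithinAt)
      (fun t ht => (hderiv t (interior_subset ht)).hasDerivWithinAt) fun t ht => ?_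
    rw [interior_Icc] at ht
    have ht0 : 0 < t := hp0.trans ht.1
    have ht1 : 0 < 1 - t := by linarith [ht.2]
    have : (t - p) / (t * (1 - t)) - 2 * (2 * (t - p)) =
        (t - p) * (2 * t - 1) ^ 2 / (t * (1 - t)) := by
      field_simp
      ring
    rw [this]
    have : 0 ≤ t - p := by linarith [ht.1]
    positivity
  have := hmono (Set.left_mem_Icc.2 hpq) (Set.right_mem_Icc.2 hpq) hpq
  simp only [f, klBernoulli_self, sub_self] at this
  linarith

lemma two_mul_sq_sub_le_klBernoulli (hp0 : 0 < p) (hp1 : p < 1) (hq0 : 0 < q) (hq1 : q < 1) :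
    2 * (q - p) ^ 2 ≤ klBernoulli p q := by
  rcases le_total p q with hpq | hqp
  · exact two_mul_sq_sub_le_klBernoulli_of_le hp0 hpq hq1
  · have := two_mul_sq_sub_le_klBernoulli_of_le (p := 1 - p) (q := 1 - q) (by linarith)
      (by linarith) (by linarith)
    rwa [klBernoulli_one_sub, show 1 - q - (1 - p) = -(q - p) by ring, neg_sq] at this

end Pinsker

lemma min_div_two_le_one_sub_exp_neg {x : ℝ} (hx : 0 ≤ x) : min x 1 / 2 ≤ 1 - exp (-x) := by
  have hexp : exp (-x) * (1 + x) ≤ 1 := by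
    rw [exp_neg, inv_mul_le_iff₀ (exp_pos x), mul_one, add_comm]
    exact add_one_le_exp x
  rcases le_total x 1 with h | h
  · rw [min_eq_left h]
    nlinarith [exp_pos (-x)]
  · rw [min_eq_right h]
    nlinarith [exp_pos (-x)]

lemma hasSum_exp_neg_mul {D : ℝ} (hD : 0 < D) :
    HasSum (fun j : ℕ => exp (-D * j)) (1 - exp (-D))⁻¹ := by
  convert hasSum_geometric_of_lt_one (exp_nonneg (-D)) (exp_lt_one_iff.2 (neg_lt_zero.2 hD))
    using 2 with j
  rw [← exp_nat_mul, mul_comm]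

lemma tsum_exp_neg_mul_le {D : ℝ} (hD : 0 < D) : ∑' j : ℕ, exp (-D * j) ≤ 2 / min D 1 := by
  have hmin : 0 < min D 1 := lt_min hD one_pos
  have := min_div_two_le_one_sub_exp_neg hD.le
  rw [(hasSum_exp_neg_mul hD).tsum_eq, ← one_div, div_le_div_iff₀ (by linarith) hmin]
  linarith

lemma tsum_div_mul_exp_neg_le {q Δ D : ℝ} (hq : q ≤ 1) (hΔ0 : 0 < Δ) (hΔ2 : Δ ≤ 2)
    (hD : Δ ^ 2 / 2 ≤ D) : ∑' j : ℕ, q / (Δ / 2) * exp (-D * j) ≤ 16 / Δ ^ 3 := by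
  have hD0 : 0 < D := by nlinarith
  have hcoef : q / (Δ / 2) ≤ 2 / Δ := by
    rw [div_le_div_iff₀ (by positivity) hΔ0]
    nlinarith
  have hmin : Δ ^ 2 / 4 ≤ min D 1 := le_min (by linarith) (by nlinarith)
  have htail : ∑' j : ℕ, exp (-D * j) ≤ 8 / Δ ^ 2 :=
    calc ∑' j : ℕ, exp (-D * j) ≤ 2 / min D 1 := tsum_exp_neg_mul_le hD0
      _ ≤ 2 / (Δ ^ 2 / 4) := by gcongr
      _ = 8 / Δ ^ 2 := by ring
  rw [tsum_mul_left]
  calc q / (Δ / 2) * ∑' j : ℕ, exp (-D * j) ≤ 2 / Δ * (8 / Δ ^ 2) :=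
        mul_le_mul hcoef htail (tsum_nonneg fun j => (exp_pos _).le) (by positivity)
    _ = 16 / Δ ^ 3 := by ring

section RandomIndex

variable {Ω : Type*}

lemma ite_le_eq_sum_indicator (X : Ω → ℕ) (m : ℕ) (g : ℕ → ℝ) (ω : Ω) :
    (if X ω ≤ m then g (X ω) else 0) =
      ∑ k ∈ range (m + 1), {ω | X ω = k}.indicator (fun _ => g k) ω := by
  simp [Set.indicator_apply, sum_ite_eq]

variable [MeasurableSpace Ω] {P : Measure Ω}

lemma integrable_ite_le {X : Ω → ℕ} (hX : Measurable X) (hfin : ∀ k, P {ω | X ω = k} ≠ ⊤)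
    (m : ℕ) (g : ℕ → ℝ) : Integrable (fun ω => if X ω ≤ m then g (X ω) else 0) P := by
  simp_rw [ite_le_eq_sum_indicator]
  exact integrable_finsetSum _ fun k _ =>
    (integrable_indicator_iff (hX (measurableSet_singleton k))).2 (integrableOn_const (hfin k))

lemma integral_ite_le {X : Ω → ℕ} (hX : Measurable X) (hfin : ∀ k, P {ω | X ω = k} ≠ ⊤)
    (m : ℕ) (g : ℕ → ℝ) :
    ∫ ω, (if X ω ≤ m then g (X ω) else 0) ∂P = ∑ k ∈ range (m + 1), P.real {ω | X ω = k} * g k := by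
  simp_rw [ite_le_eq_sum_indicator]
  rw [integral_finsetSum _ fun k _ =>
    (integrable_indicator_iff (hX (measurableSet_singleton k))).2 (integrableOn_const (hfin k))]
  exact sum_congr rfl fun k _ => integral_indicator_const _ (hX (measurableSet_singleton k))

/-- `J` need not be measurable: `integral_mono_of_nonneg` asks for integrability of the upper
bound only. -/
lemma integral_at_random_index_le_sum {s : ℕ → Ω → ℕ} (hs : ∀ j, Measurable (s j))
    (hfin : ∀ j k, P {ω | s j ω = k} ≠ ⊤) {J : Ω → ℕ} {T : ℕ} (hJ : ∀ ω, J ω < T) (m : ℕ → ℕ)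
    {g : ℕ → ℕ → ℝ} (hg : ∀ j k, 0 ≤ g j k) :
    ∫ ω, (if s (J ω) ω ≤ m (J ω) then g (J ω) (s (J ω) ω) else 0) ∂P ≤
      ∑ j ∈ range T, ∑ k ∈ range (m j + 1), P.real {ω | s j ω = k} * g j k := by
  have hnonneg : ∀ j ω, 0 ≤ if s j ω ≤ m j then g j (s j ω) else 0 := fun j ω => by
    split_ifs
    exacts [hg _ _, le_rfl]
  have hint : ∀ j ∈ range T, Integrable (fun ω => if s j ω ≤ m j then g j (s j ω) else 0) P :=
    fun j _ => integrable_ite_le (hs j) (hfin j) (m j) (g j)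
  calc ∫ ω, (if s (J ω) ω ≤ m (J ω) then g (J ω) (s (J ω) ω) else 0) ∂P
      ≤ ∫ ω, ∑ j ∈ range T, (if s j ω ≤ m j then g j (s j ω) else 0) ∂P :=
        integral_mono_of_nonneg (ae_of_all _ fun ω => hnonneg (J ω) ω)
          (integrable_finsetSum _ hint) (ae_of_all _ fun ω =>
            single_le_sum (f := fun j => if s j ω ≤ m j then g j (s j ω) else 0)
              (fun j _ => hnonneg j ω) (mem_range.2 (hJ ω)))
    _ = _ := by
        rw [integral_finsetSum _ hint]
        exact sum_congr rfl fun j _ => integral_ite_le (hs j) (hfin j) (m j) (g j)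

end RandomIndex

theorem random_index_union_bound_general
    {Ω : Type*} [MeasurableSpace Ω] (ℙ : Measure Ω)
    (ya μ₁ Δa Da : ℝ) (hy : 0 < ya) (hyμ : ya < μ₁) (hμ : μ₁ < 1)
    (hΔ : Δa / 2 = μ₁ - ya)
    (hDa : Da = ya * Real.log (ya / μ₁) + (1 - ya) * Real.log ((1 - ya) / (1 - μ₁)))
    (T : ℕ)
    (s : ℕ → Ω → ℕ) (hs_meas : ∀ j, Measurable (s j))
    (hs_law : ∀ j s₀, ℙ {ω | s j ω = s₀} = ENNReal.ofReal (binPMF j μ₁ s₀))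
    (jstar : Ω → ℕ) (hjstar_lt : ∀ ω, jstar ω < T) :
    (∫ ω, (if s (jstar ω) ω ≤ ⌊ya * (jstar ω : ℝ)⌋₊ then
        1 / binCDF (jstar ω + 1) ya (s (jstar ω) ω : ℤ) else 0) ∂ℙ) ≤
      (∑ j ∈ Finset.range T, ∑ s₀ ∈ Finset.range (⌊ya * (j : ℝ)⌋₊ + 1),
        binPMF j μ₁ s₀ / binCDF (j + 1) ya (s₀ : ℤ)) ∧
    (∑ j ∈ Finset.range T, ∑ s₀ ∈ Finset.range (⌊ya * (j : ℝ)⌋₊ + 1),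
        binPMF j μ₁ s₀ / binCDF (j + 1) ya (s₀ : ℤ)) ≤
      (∑' j : ℕ, (μ₁ / (Δa / 2)) * Real.exp (-Da * j)) ∧
    (∑' j : ℕ, (μ₁ / (Δa / 2)) * Real.exp (-Da * j)) ≤ 16 / Δa ^ 3 := by
  have hμ0 : 0 < μ₁ := hy.trans hyμ
  have hΔ0 : 0 < Δa := by linarith
  have hpinsker : Δa ^ 2 / 2 ≤ Da := by
    rw [hDa, show Δa ^ 2 / 2 = 2 * (μ₁ - ya) ^ 2 by rw [← hΔ]; ring]
    exact two_mul_sq_sub_le_klBernoulli hy (hyμ.trans hμ) hμ0 hμ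
  have hDa0 : 0 < Da := by nlinarith
  refine ⟨?_, ?_, ?_⟩
  · have hpmf : ∀ j k, ℙ.real {ω | s j ω = k} = binPMF j μ₁ k := fun j k => by
      rw [measureReal_def, hs_law, ENNReal.toReal_ofReal (binPMF_nonneg_s18 j hμ0.le hμ.le k)]
    refine (integral_at_random_index_le_sum hs_meas (fun j k => by simp [hs_law]) hjstar_lt
      (fun j => ⌊ya * j⌋₊) (g := fun j k => 1 / binCDF (j + 1) ya k)
      fun j k => one_div_nonneg.2 (binCDF_nonneg _ hy.le (hyμ.trans hμ).le _)).trans_eq ?_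
    simp only [hpmf, mul_one_div]
  · calc _ ≤ ∑ j ∈ range T, μ₁ / (Δa / 2) * exp (-Da * j) :=
          sum_le_sum fun j _ => by
            rw [hΔ, hDa]
            exact sum_binPMF_div_binCDF_le hy hyμ hμ j
      _ ≤ _ := ((hasSum_exp_neg_mul hDa0).summable.mul_left _).sum_le_tsum _
          fun j _ => by positivity
  · exact tsum_div_mul_exp_neg_le hμ.le hΔ0 (by linarith) hpinsker

/-- for `0 < y_a < μ₁ < 1` with `Δ_a/2 = μ₁ − y_a`, `s(j) ~ Binomial(j, μ₁)`
for each `j`, and `j*` any random index in `{0,…,T−1}` determined by the sequence `s(·)`: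
`E[(1/F^B_{j*+1, y_a}(s(j*))) · I(s(j*) ≤ ⌊y_a j*⌋)]
  ≤ ∑_{j=0}^{T−1} ∑_{s=0}^{⌊y_a j⌋} f^B_{j,μ₁}(s)/F^B_{j+1,y_a}(s)
  ≤ ∑_{j≥0} (μ₁/(Δ_a/2)) e^{−D_a j} ≤ 16/Δ_a³`,
where `D_a` is the KL divergence between `Bernoulli(y_a)` and `Bernoulli(μ₁)`. -/
theorem random_index_union_bound
    {Ω : Type*} [MeasurableSpace Ω] (ℙ : Measure Ω) [IsProbabilityMeasure ℙ]
    (ya μ₁ Δa Da : ℝ) (hy : 0 < ya) (hyμ : ya < μ₁) (hμ : μ₁ < 1)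
    (hΔ : Δa / 2 = μ₁ - ya)
    (hDa : Da = ya * Real.log (ya / μ₁) + (1 - ya) * Real.log ((1 - ya) / (1 - μ₁)))
    (T : ℕ) (hT : 0 < T)
    (s : ℕ → Ω → ℕ) (hs_meas : ∀ j, Measurable (s j))
    (hs_law : ∀ j s₀, ℙ {ω | s j ω = s₀} = ENNReal.ofReal (binPMF j μ₁ s₀))
    (jstar : Ω → ℕ) (hjstar_lt : ∀ ω, jstar ω < T)
    (hjstar_det : ∃ f : (ℕ → ℕ) → ℕ, ∀ ω, jstar ω = f (fun j => s j ω)) :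
    (∫ ω, (if s (jstar ω) ω ≤ ⌊ya * (jstar ω : ℝ)⌋₊ then
        1 / binCDF (jstar ω + 1) ya (s (jstar ω) ω : ℤ) else 0) ∂ℙ) ≤
      (∑ j ∈ Finset.range T, ∑ s₀ ∈ Finset.range (⌊ya * (j : ℝ)⌋₊ + 1),
        binPMF j μ₁ s₀ / binCDF (j + 1) ya (s₀ : ℤ)) ∧
    (∑ j ∈ Finset.range T, ∑ s₀ ∈ Finset.range (⌊ya * (j : ℝ)⌋₊ + 1),
        binPMF j μ₁ s₀ / binCDF (j + 1) ya (s₀ : ℤ)) ≤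
      (∑' j : ℕ, (μ₁ / (Δa / 2)) * Real.exp (-Da * j)) ∧
    (∑' j : ℕ, (μ₁ / (Δa / 2)) * Real.exp (-Da * j)) ≤ 16 / Δa ^ 3 :=
  random_index_union_bound_general ℙ ya μ₁ Δa Da hy hyμ hμ hΔ hDa T s hs_meas hs_law jstar hjstar_lt
end
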